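/- arXiv:1908.03714 — 2 statements merged into one kernel-verified Lean document; each statement's English description precedes it below -/
import Mathlib

section
/- For every k ≥ 1 and all integers n₁, …, n_k ≥ 0, the graph E(n₁,…,n_k) is move equivalent via the moves (O) and (I-) to the graph E(0,…,0) with k entries equal to 0 (a plain cycle of length k). -/
open Classical

/-- A graph in the sense of graph C*-algebras: finitely many vertices,
countably many edges, with source and range maps. -/
structure CKGraph where
  V : Type
  E : Type
  finV : Finite V
  cntE : Countable E
  s : E → V
  r : E → V

attribute [instance] CKGraph.finV CKGraph.cntE

namespace CKGraph

/-- Isomorphism of graphs: bijections on vertices and edges intertwining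
the source and range maps. -/
def Iso (G H : CKGraph) : Prop :=
  ∃ (f : G.V ≃ H.V) (g : G.E ≃ H.E),
    (∀ e, H.s (g e) = f (G.s e)) ∧ (∀ e, H.r (g e) = f (G.r e))

/-- A vertex is a source if it receives no edges. -/
def IsSource (G : CKGraph) (v : G.V) : Prop := ∀ e, G.r e ≠ v

/-- A vertex is a sink if it emits no edges. -/
def IsSink (G : CKGraph) (v : G.V) : Prop := ∀ e, G.s e ≠ v

/-- A vertex is regular if it emits at least one and only finitely many edges. -/
def Regular (G : CKGraph) (v : G.V) : Prop :=
  Nonempty {e : G.E // G.s e = v} ∧ Finite {e : G.E // G.s e = v}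

/-- The outsplit graph of `G` at the vertex `w` with respect to the
partition of `s⁻¹(w)` encoded by `P`. -/
noncomputable def outsplit (G : CKGraph) (w : G.V) (n : ℕ)
    (P : {e : G.E // G.s e = w} → Fin n) : CKGraph where
  V := {v : G.V // v ≠ w} ⊕ Fin n
  E := {e : G.E // G.r e ≠ w} ⊕ ({e : G.E // G.r e = w} × Fin n)
  finV := inferInstance
  cntE := inferInstance
  s := Sum.elim
    (fun e => if h : G.s e.1 = w then Sum.inr (P ⟨e.1, h⟩) else Sum.inl ⟨G.s e.1, h⟩)
    (fun ei => if h : G.s ei.1.1 = w then Sum.inr (P ⟨ei.1.1, h⟩)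
               else Sum.inl ⟨G.s ei.1.1, h⟩)
  r := Sum.elim
    (fun e => Sum.inl ⟨G.r e.1, e.2⟩)
    (fun ei => Sum.inr ei.2)

/-- Move (O): `H` is obtained from `G` by an outsplit at a non-sink `w`
with respect to a partition of `s⁻¹(w)` into nonempty sets, at most one of
which is infinite. -/
def MoveO (G H : CKGraph) : Prop :=
  ∃ (w : G.V) (n : ℕ) (P : {e : G.E // G.s e = w} → Fin n),
    Nonempty {e : G.E // G.s e = w} ∧
    Function.Surjective P ∧
    (∀ i j : Fin n, {e | P e = i}.Infinite → {e | P e = j}.Infinite → i = j) ∧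
    Iso (G.outsplit w n P) H

/-- The insplit graph of `G` at the regular vertex `w` with respect to the
partition of `r⁻¹(w)` (into possibly empty sets) encoded by `P`. -/
noncomputable def insplit (G : CKGraph) (w : G.V) (n : ℕ)
    (P : {e : G.E // G.r e = w} → Fin n) : CKGraph where
  V := {v : G.V // v ≠ w} ⊕ Fin n
  E := {e : G.E // G.s e ≠ w} ⊕ ({e : G.E // G.s e = w} × Fin n)
  finV := inferInstance
  cntE := inferInstance
  s := Sum.elim
    (fun e => Sum.inl ⟨G.s e.1, e.2⟩)
    (fun ei => Sum.inr ei.2)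
  r := Sum.elim
    (fun e => if h : G.r e.1 = w then Sum.inr (P ⟨e.1, h⟩) else Sum.inl ⟨G.r e.1, h⟩)
    (fun ei => if h : G.r ei.1.1 = w then Sum.inr (P ⟨ei.1.1, h⟩)
               else Sum.inl ⟨G.r ei.1.1, h⟩)

/-- Move (I-): `H` is obtained from `G` by an insplit at a regular vertex `w`
with respect to a partition of `r⁻¹(w)` into `n ≥ 1` possibly empty sets. -/
def MoveIm (G H : CKGraph) : Prop :=
  ∃ (w : G.V) (n : ℕ) (P : {e : G.E // G.r e = w} → Fin n),
    G.Regular w ∧ 1 ≤ n ∧ Iso (G.insplit w n P) H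

/-- Move (I+): `G` and `H` are both obtained from a common graph `K` by
insplitting at the same regular vertex via two partitions with the same
number of (possibly empty) sets. -/
def MoveIp (G H : CKGraph) : Prop :=
  ∃ (K : CKGraph) (w : K.V) (n : ℕ)
    (P Q : {e : K.E // K.r e = w} → Fin n),
    K.Regular w ∧ 1 ≤ n ∧
    Iso (K.insplit w n P) G ∧ Iso (K.insplit w n Q) H

/-- The reduced graph of `G` at a regular vertex `w` supporting no loop. -/
noncomputable def reduce (G : CKGraph) (w : G.V) : CKGraph where
  V := {v : G.V // v ≠ w} ⊕ Unit
  E := {e : G.E // G.s e ≠ w ∧ G.r e ≠ w} ⊕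
       (({e : G.E // G.r e = w} × {f : G.E // G.s f = w}) ⊕ {f : G.E // G.s f = w})
  finV := inferInstance
  cntE := inferInstance
  s := Sum.elim
    (fun e => Sum.inl ⟨G.s e.1, e.2.1⟩)
    (Sum.elim
      (fun ef => if h : G.s ef.1.1 = w then Sum.inr () else Sum.inl ⟨G.s ef.1.1, h⟩)
      (fun _ => Sum.inr ()))
  r := Sum.elim
    (fun e => Sum.inl ⟨G.r e.1, e.2.2⟩)
    (Sum.elim
      (fun ef => if h : G.r ef.2.1 = w then Sum.inr () else Sum.inl ⟨G.r ef.2.1, h⟩)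
      (fun f => if h : G.r f.1 = w then Sum.inr () else Sum.inl ⟨G.r f.1, h⟩))

/-- Move (R+): `H` is obtained from `G` by a unital reduction at a regular
vertex `w` which supports no loop. -/
def MoveRp (G H : CKGraph) : Prop :=
  ∃ w : G.V, G.Regular w ∧ (∀ e : G.E, ¬ (G.s e = w ∧ G.r e = w)) ∧
    Iso (G.reduce w) H

/-- Two graphs are move equivalent via the relation `R` (describing the
allowed moves) if there is a finite sequence of graphs starting at the first,
each obtained from the previous by a move in `R` or the inverse of such a
move, and ending at a graph isomorphic to the second. -/
def MoveEquiv (R : CKGraph → CKGraph → Prop) (G H : CKGraph) : Prop :=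
  ∃ K, Relation.ReflTransGen (fun A B => R A B ∨ R B A) G K ∧ Iso K H

/-- The graph `G(c,n)`: a vertex with `c` loops, receiving `n` edges from a
second (source) vertex; for `n = 0` the source vertex is omitted. -/
def Gcn (c n : ℕ) : CKGraph where
  V := Unit ⊕ Fin (min n 1)
  E := Fin c ⊕ Fin n
  finV := inferInstance
  cntE := inferInstance
  s := Sum.elim (fun _ => Sum.inl ()) (fun e => Sum.inr ⟨0, lt_min e.pos one_pos⟩)
  r := fun _ => Sum.inl ()

/-- The graph with adjacency matrix `A` (the `(i,j)` entry being the number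
of edges from vertex `i` to vertex `j`). -/
def adjGraph {k : ℕ} (A : Fin k → Fin k → ℕ) : CKGraph where
  V := Fin k
  E := (i : Fin k) × (j : Fin k) × Fin (A i j)
  finV := inferInstance
  cntE := inferInstance
  s := fun e => e.1
  r := fun e => e.2.1


/-- Entry-wise product of two 2×2 matrices of natural numbers. -/
def matMul (A B : Fin 2 → Fin 2 → ℕ) : Fin 2 → Fin 2 → ℕ := fun i j => ∑ l, A i l * B l j

/-- Matrix-vector product for 2×2 matrices of natural numbers. -/
def matVec (A : Fin 2 → Fin 2 → ℕ) (D : Fin 2 → ℕ) : Fin 2 → ℕ := fun i => ∑ l, A i l * D l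

def T1 : Fin 2 → Fin 2 → ℕ := ![![1, 1], ![0, 1]]

def T2 : Fin 2 → Fin 2 → ℕ := ![![1, 0], ![1, 1]]

/-- The graph represented by the pair `(D, B)`: the graph `Γ(d₁-1, d₂-1; a)`
with `a i j = b j i + δ i j`. -/
def pairGraph (D : Fin 2 → ℕ) (B : Fin 2 → Fin 2 → ℕ) : CKGraph :=
  adjGraph ![![0, D 0 - 1, D 1 - 1], ![0, B 0 0 + 1, B 1 0], ![0, B 0 1, B 1 1 + 1]]

/-- Number of edges emitted by the auxiliary source attached above vertex
`u_t` in the graph `F(n₁,…,n_k)`; here `n t` denotes `n_{t+1}` (0-indexed). -/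
def srcCount (k : ℕ) (n : Fin k → ℕ) (t : Fin k) : ℕ :=
  if t.val + 1 < k then n t - 1 else n t

/-- The graph `F(n₁,…,n_k)` : vertices `u₀,…,u_{k-1}` (`u₀` a sink), one edge
`u_j → u_{j-1}` for `1 ≤ j ≤ k-1`, and for each `t` a source emitting
`srcCount` edges to `u_t` (present only when that count is positive), so that
the number of paths of length `i` ending at `u₀` is `nᵢ`. -/
def Fgraph (k : ℕ) (n : Fin k → ℕ) : CKGraph where
  V := Fin k ⊕ {t : Fin k // 0 < srcCount k n t}
  E := {j : Fin k // 0 < j.val} ⊕ ((t : Fin k) × Fin (srcCount k n t))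
  finV := inferInstance
  cntE := inferInstance
  s := Sum.elim (fun j => Sum.inl j.1) (fun te => Sum.inr ⟨te.1, te.2.pos⟩)
  r := Sum.elim
    (fun j => Sum.inl ⟨j.1.val - 1, lt_of_le_of_lt (Nat.sub_le _ _) j.1.isLt⟩)
    (fun te => Sum.inl te.1)

/-- The graph `E(n₁,…,n_k)` : a cycle `v₀ → v₁ → ⋯ → v_{k-1} → v₀` together
with a single extra vertex emitting `n i` edges to `v i`; the extra vertex is
omitted when all `n i = 0`. -/
def Egraph (k : ℕ) (n : Fin k → ℕ) : CKGraph where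
  V := Fin k ⊕ {_u : Unit // ∃ i, 0 < n i}
  E := Fin k ⊕ ((i : Fin k) × Fin (n i))
  finV := inferInstance
  cntE := inferInstance
  s := Sum.elim (fun j => Sum.inl j) (fun ie => Sum.inr ⟨(), ⟨ie.1, ie.2.pos⟩⟩)
  r := Sum.elim (fun j => Sum.inl ⟨(j.val + 1) % k, Nat.mod_lt _ j.pos⟩)
    (fun ie => Sum.inl ie.1)

/-- The graph `T k` : vertices `u₀,…,u_k`, countably infinitely many loops at
`u₀` and exactly one edge `u_j → u_{j-1}` for `1 ≤ j ≤ k`. -/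
def Tgraph (k : ℕ) : CKGraph where
  V := Fin (k + 1)
  E := ℕ ⊕ {j : Fin (k + 1) // 0 < j.val}
  finV := inferInstance
  cntE := inferInstance
  s := Sum.elim (fun _ => ⟨0, Nat.succ_pos k⟩) (fun j => j.1)
  r := Sum.elim (fun _ => ⟨0, Nat.succ_pos k⟩)
    (fun j => ⟨j.1.val - 1, lt_of_le_of_lt (Nat.sub_le _ _) j.1.isLt⟩)

/-- One-step reachability: there is an edge from `u` to `v`. -/
def Step (G : CKGraph) (u v : G.V) : Prop := ∃ e, G.s e = u ∧ G.r e = v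

/-- There is a (possibly empty) path from `u` to `v`. -/
def Reaches (G : CKGraph) : G.V → G.V → Prop := Relation.ReflTransGen G.Step

/-- `v` lies on a cycle: there is a nontrivial path from `v` back to `v`. -/
def OnCycle (G : CKGraph) (v : G.V) : Prop := ∃ u, G.Step v u ∧ G.Reaches u v

/-- The core of `G`: the vertices lying on cycles if `G` has a cycle, and
otherwise the sinks. -/
def core (G : CKGraph) (v : G.V) : Prop :=
  ((∃ u, G.OnCycle u) → G.OnCycle v) ∧ ((¬ ∃ u, G.OnCycle u) → G.IsSink v)

/-- A transitional vertex: neither a source nor in the core. -/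
def Transitional (G : CKGraph) (v : G.V) : Prop := ¬ G.IsSource v ∧ ¬ G.core v

/-- The core hypotheses: any two vertices on cycles are mutually connected by
paths; if there is a cycle there are no sinks, otherwise there is exactly one
sink; every vertex reaches the core; and every non-core vertex emits only
finitely many edges. -/
structure CoreHyp (G : CKGraph) : Prop where
  conn : ∀ u v, G.OnCycle u → G.OnCycle v → G.Reaches u v
  noSinks : (∃ v, G.OnCycle v) → ∀ v, ¬ G.IsSink v
  uniqueSink : (¬ ∃ v, G.OnCycle v) → ∃! v, G.IsSink v
  reach : ∀ v, ∃ c, G.core c ∧ G.Reaches v c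
  finEmit : ∀ v, ¬ G.core v → Finite {e : G.E // G.s e = v}

/-- The core subgraph: core vertices together with all edges between them. -/
def coreSubgraph (G : CKGraph) : CKGraph where
  V := {v : G.V // G.core v}
  E := {e : G.E // G.core (G.s e) ∧ G.core (G.r e)}
  finV := inferInstance
  cntE := inferInstance
  s := fun e => ⟨G.s e.1, e.2.1⟩
  r := fun e => ⟨G.r e.1, e.2.2⟩

end CKGraph

open CKGraph

/-!
Write `E(n₁,…,n_k)` as the cycle with one source attached. An outsplit of that source splits
off one of its edges, say the one into `v_j`, as a second source; a source with a single edge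
into `v_j` is also what insplitting the predecessor of `v_j` into two parts, the second one
receiving no edges, creates. So an (O) move followed by an inverse (I-) move removes one edge
of the source, and the last edge is removed by an inverse (I-) move alone.
-/

namespace CKGraph

variable {G H K : CKGraph}

theorem Iso.refl (G : CKGraph) : Iso G G :=
  ⟨Equiv.refl _, Equiv.refl _, fun _ => rfl, fun _ => rfl⟩

theorem Iso.trans : Iso G H → Iso H K → Iso G K := by
  rintro ⟨f, g, hs, hr⟩ ⟨f', g', hs', hr'⟩
  exact ⟨f.trans f', g.trans g', fun e => by simp [hs, hs'], fun e => by simp [hr, hr']⟩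

theorem Iso.of_inverses (f : G.V → H.V) (f' : H.V → G.V) (g : G.E → H.E) (g' : H.E → G.E)
    (hf : ∀ v, f' (f v) = v) (hf' : ∀ v, f (f' v) = v)
    (hg : ∀ e, g' (g e) = e) (hg' : ∀ e, g (g' e) = e)
    (hs : ∀ e, H.s (g e) = f (G.s e)) (hr : ∀ e, H.r (g e) = f (G.r e)) : Iso G H :=
  ⟨⟨f, f', hf, hf'⟩, ⟨g, g', hg, hg'⟩, hs, hr⟩

def addSource (G : CKGraph) {F : Type} [Countable F] (t : F → G.V) : CKGraph where
  V := G.V ⊕ Unit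
  E := G.E ⊕ F
  finV := inferInstance
  cntE := inferInstance
  s := Sum.elim (fun e => Sum.inl (G.s e)) (fun _ => Sum.inr ())
  r := Sum.elim (fun e => Sum.inl (G.r e)) (fun a => Sum.inl (t a))

theorem addSource_congr {F F' : Type} [Countable F] [Countable F'] {t : F → G.V}
    {t' : F' → G.V} (e : F ≃ F') (h : ∀ a, t' (e a) = t a) :
    Iso (G.addSource t) (G.addSource t') := by
  unfold addSource
  exact ⟨Equiv.refl _, Equiv.sumCongr (Equiv.refl _) e, by rintro (_ | _) <;> rfl,
    by rintro (_ | a) <;> simp [h]⟩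

theorem insplit_one_iso (G : CKGraph) (w : G.V) (P : {e // G.r e = w} → Fin 1) :
    Iso (G.insplit w 1 P) G := by
  unfold insplit
  refine .of_inverses (Sum.elim Subtype.val fun _ => w)
      (fun v => if h : v = w then Sum.inr 0 else Sum.inl ⟨v, h⟩)
      (Sum.elim Subtype.val fun p => p.1.1)
      (fun e => if h : G.s e = w then Sum.inr (⟨e, h⟩, 0) else Sum.inl ⟨e, h⟩)
      ?_ ?_ ?_ ?_ ?_ ?_
  · rintro (⟨v, h⟩ | c)
    · simp [h]
    · simp [Fin.fin_one_eq_zero c]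
  · intro v; by_cases h : v = w <;> simp [h]
  · rintro (⟨e, h⟩ | ⟨⟨e, h⟩, c⟩)
    · simp [h]
    · simp [h, Fin.fin_one_eq_zero c]
  · intro e; by_cases h : G.s e = w <;> simp [h]
  · rintro (⟨e, h⟩ | ⟨⟨e, h⟩, c⟩) <;> simp [h]
  · rintro (⟨e, h⟩ | ⟨⟨e, h⟩, c⟩) <;> dsimp only [Sum.elim_inl, Sum.elim_inr] <;>
      split_ifs with h' <;> simp [h']

theorem insplit_two_iso_addSource (G : CKGraph) (w : G.V) :
    Iso (G.insplit w 2 fun _ => 0) (G.addSource fun e : {e // G.s e = w} => G.r e) := by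
  unfold insplit addSource
  refine .of_inverses
      (Sum.elim (fun v => Sum.inl v.1) fun c => if c = 0 then Sum.inl w else Sum.inr ())
      (Sum.elim (fun v => if h : v = w then Sum.inr 0 else Sum.inl ⟨v, h⟩) fun _ => Sum.inr 1)
      (Sum.elim (fun e => Sum.inl e.1) fun p => if p.2 = 0 then Sum.inl p.1.1 else Sum.inr p.1)
      (Sum.elim (fun e => if h : G.s e = w then Sum.inr (⟨e, h⟩, 0) else Sum.inl ⟨e, h⟩)
        fun e => Sum.inr (e, 1)) ?_ ?_ ?_ ?_ ?_ ?_
  · rintro (⟨v, h⟩ | c)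
    · simp [h]
    · fin_cases c <;> simp
  · rintro (v | _)
    · by_cases h : v = w <;> simp [h]
    · simp
  · rintro (⟨e, h⟩ | ⟨⟨e, h⟩, c⟩)
    · simp [h]
    · fin_cases c <;> simp [h]
  · rintro (e | _)
    · by_cases h : G.s e = w <;> simp [h]
    · simp
  · rintro (⟨e, h⟩ | ⟨⟨e, h⟩, c⟩)
    · simp
    · fin_cases c <;> simp [h]
  · rintro (⟨e, h⟩ | ⟨⟨e, h⟩, c⟩) <;> dsimp only [Sum.elim_inl, Sum.elim_inr] <;>
      split_ifs <;> simp_all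

theorem isSource_addSource {F : Type} [Countable F] (t : F → G.V) :
    (G.addSource t).IsSource (Sum.inr ()) := by
  rintro (e | a) <;> simp [addSource]

def splitNone {F : Type} [Countable F] (t : Option F → G.V) :
    {e // (G.addSource t).s e = Sum.inr ()} → Fin 2 :=
  fun e => Sum.elim (fun _ => 1) (fun a => a.elim 0 fun _ => 1) e.1

theorem outsplit_splitNone_iso {F : Type} [Countable F] (t : Option F → G.V) :
    Iso ((G.addSource t).outsplit (Sum.inr ()) 2 (splitNone t))
      ((G.addSource (t ∘ some)).addSource fun _ : Unit => Sum.inl (t none)) := by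
  unfold outsplit
  refine .of_inverses
      (Sum.elim (fun v => Sum.elim (fun v => Sum.inl (Sum.inl v)) (fun _ => Sum.inr ()) v.1)
        fun c => if c = 0 then Sum.inr () else Sum.inl (Sum.inr ()))
      (Sum.elim (Sum.elim (fun v => Sum.inl ⟨Sum.inl v, Sum.inl_ne_inr⟩) fun _ => Sum.inr 1)
        fun _ => Sum.inr 0)
      (Sum.elim (fun e => Sum.elim (fun e => Sum.inl (Sum.inl e))
          (fun a => Option.elim a (Sum.inr ()) fun a => Sum.inl (Sum.inr a)) e.1)
        fun p => absurd p.1.2 (isSource_addSource t _))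
      (Sum.elim (Sum.elim (fun e => Sum.inl ⟨Sum.inl e, isSource_addSource t _⟩)
          fun a => Sum.inl ⟨Sum.inr (some a), isSource_addSource t _⟩)
        fun _ => Sum.inl ⟨Sum.inr none, isSource_addSource t _⟩) ?_ ?_ ?_ ?_ ?_ ?_
  · rintro (⟨v | _, h⟩ | c)
    · rfl
    · exact absurd rfl h
    · fin_cases c <;> rfl
  · rintro ((v | _) | _) <;> rfl
  · rintro (⟨e | _ | a, h⟩ | ⟨⟨e, h⟩, c⟩)
    any_goals rfl
    exact absurd h (isSource_addSource t e)
  · rintro ((e | a) | _) <;> rfl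
  · rintro (⟨e | _ | a, h⟩ | ⟨⟨e, h⟩, c⟩)
    · simp [addSource]
    · simp [addSource, splitNone]
    · simp [addSource, splitNone]
    · exact absurd h (isSource_addSource t e)
  · rintro (⟨e | _ | a, h⟩ | ⟨⟨e, h⟩, c⟩)
    any_goals rfl
    exact absurd h (isSource_addSource t e)

def EmitsOnly (G : CKGraph) (w : G.V) (e₀ : G.E) : Prop := ∀ e, G.s e = w ↔ e = e₀

theorem EmitsOnly.regular {w : G.V} {e₀ : G.E} (h : G.EmitsOnly w e₀) : G.Regular w :=
  have : Subsingleton {e // G.s e = w} :=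
    ⟨fun a b => Subtype.ext (((h _).1 a.2).trans ((h _).1 b.2).symm)⟩
  ⟨⟨⟨e₀, (h e₀).2 rfl⟩⟩, inferInstance⟩

theorem EmitsOnly.addSource {w : G.V} {e₀ : G.E} (h : G.EmitsOnly w e₀) {F : Type} [Countable F]
    (t : F → G.V) : (G.addSource t).EmitsOnly (Sum.inl w) (Sum.inl e₀) := by
  rintro (e | a)
  · simp [CKGraph.addSource, h e]
  · simp [CKGraph.addSource]

theorem moveIm_of_iso {w : G.V} (hw : G.Regular w) (h : Iso G H) : MoveIm G H :=
  ⟨w, 1, fun _ => 0, hw, le_rfl, (G.insplit_one_iso w _).trans h⟩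

theorem moveIm_addSource {w : G.V} {e₀ : G.E} (hw : G.EmitsOnly w e₀) {F : Type} [Countable F]
    [Unique F] (t : F → G.V) (ht : t default = G.r e₀) : MoveIm G (G.addSource t) := by
  have hfiber (e : {e // G.s e = w}) : e.1 = e₀ := (hw e.1).1 e.2
  let fiberEquiv : {e // G.s e = w} ≃ F :=
    ⟨fun _ => default, fun _ => ⟨e₀, (hw e₀).2 rfl⟩, fun e => Subtype.ext (hfiber e).symm,
      fun _ => Subsingleton.elim _ _⟩
  exact ⟨w, 2, fun _ => 0, hw.regular, one_le_two, (G.insplit_two_iso_addSource w).trans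
    (addSource_congr fiberEquiv fun e => ht.trans (congrArg G.r (hfiber e).symm))⟩

theorem moveO_addSource {F : Type} [Countable F] [Nonempty F] (t : Option F → G.V) :
    MoveO (G.addSource t)
      ((G.addSource (t ∘ some)).addSource fun _ : Unit => Sum.inl (t none)) := by
  refine ⟨Sum.inr (), 2, splitNone t, ⟨⟨Sum.inr none, rfl⟩⟩, ?_, ?_,
    outsplit_splitNone_iso t⟩
  · intro c
    fin_cases c
    · exact ⟨⟨Sum.inr none, rfl⟩, rfl⟩
    · obtain ⟨a⟩ := ‹Nonempty F›
      exact ⟨⟨Sum.inr (some a), rfl⟩, rfl⟩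
  · have hfin : {e | splitNone t e = 0}.Finite :=
      (Set.finite_singleton ⟨Sum.inr none, rfl⟩).subset fun e he => by
        rcases e with ⟨e | _ | a, h⟩
        · cases he
        · rfl
        · cases he
    have hinf (c : Fin 2) (hc : {e | splitNone t e = c}.Infinite) : c = 1 := by
      fin_cases c
      · exact absurd hfin hc
      · rfl
    exact fun i j hi hj => (hinf i hi).trans (hinf j hj).symm

def OIMove (A B : CKGraph) : Prop := MoveO A B ∨ MoveIm A B

infix:50 " ≈ₘ " => Relation.EqvGen OIMove

theorem eqvGen_of_iso {w : G.V} (hw : G.Regular w) (h : Iso G H) : G ≈ₘ H :=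
  .rel _ _ (Or.inr (moveIm_of_iso hw h))

theorem eqvGen_addSource (hG : ∀ v, ∃ w e₀, G.EmitsOnly w e₀ ∧ G.r e₀ = v) {F : Type}
    [Finite F] [Nonempty F] (t : F → G.V) : G.addSource t ≈ₘ G := by
  suffices ∀ [Countable F] (t : F → G.V) [Nonempty F], G.addSource t ≈ₘ G from this t
  clear t ‹Nonempty F›
  induction F using Finite.induction_empty_option with
  | @of_equiv α β e ih =>
    intro _ t _
    have : Countable α := Countable.of_equiv _ e.symm
    have : Nonempty α := e.nonempty
    obtain ⟨w, e₀, hw, -⟩ := hG (t (Classical.arbitrary β))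
    have hiso : Iso (G.addSource (t ∘ e)) (G.addSource t) := addSource_congr e fun _ => rfl
    calc G.addSource t ≈ₘ G.addSource (t ∘ e) :=
          symm (eqvGen_of_iso (hw.addSource _).regular hiso)
      _ ≈ₘ G := ih (t := t ∘ e)
  | h_empty => exact fun _ h => h.some.elim
  | @h_option α _ ih =>
    intro _ t _
    obtain ⟨w, e₀, hw, hr⟩ := hG (t none)
    by_cases hα : Nonempty α
    · have hO := moveO_addSource t
      have hI := moveIm_addSource (hw.addSource (t ∘ some))
        (fun _ : Unit => Sum.inl (t none)) (by simp [addSource, hr])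
      calc G.addSource t ≈ₘ (G.addSource (t ∘ some)).addSource _ := .rel _ _ (Or.inl hO)
        _ ≈ₘ G.addSource (t ∘ some) := symm (.rel _ _ (Or.inr hI))
        _ ≈ₘ G := ih (t := t ∘ some)
    · have : IsEmpty α := not_nonempty_iff.mp hα
      exact symm (.rel _ _ (Or.inr (moveIm_addSource hw t hr.symm)))

def cycle (k : ℕ) : CKGraph where
  V := Fin k
  E := Fin k
  finV := inferInstance
  cntE := inferInstance
  s := id
  r := fun j => ⟨(j.val + 1) % k, Nat.mod_lt _ j.pos⟩

theorem cycle_r_eq_finRotate {k : ℕ} (j : Fin k) : (cycle k).r j = finRotate k j := by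
  have := j.neZero
  refine Fin.ext ?_
  rw [finRotate_apply, Fin.val_add, Fin.val_one', Nat.add_mod_mod]
  rfl

theorem cycle_exists_emitsOnly {k : ℕ} (v : Fin k) :
    ∃ w e₀, (cycle k).EmitsOnly w e₀ ∧ (cycle k).r e₀ = v :=
  ⟨_, (finRotate k).symm v, fun _ => Iff.rfl,
    (cycle_r_eq_finRotate _).trans (Equiv.apply_symm_apply _ _)⟩

theorem iso_cycle_Egraph_zero (k : ℕ) : Iso (cycle k) (Egraph k fun _ => 0) := by
  unfold Egraph
  exact .of_inverses Sum.inl (Sum.elim id fun u => absurd u.2 (by simp)) Sum.inl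
    (Sum.elim id fun ie => ie.2.elim0) (fun _ => rfl)
    (by rintro (_ | ⟨_, _, h⟩); exacts [rfl, absurd h (lt_irrefl 0)])
    (fun _ => rfl) (by rintro (_ | ⟨_, ⟨_, ⟨⟩⟩⟩); rfl) (fun _ => rfl) (fun _ => rfl)

theorem iso_addSource_cycle_Egraph {k : ℕ} {n : Fin k → ℕ} (hn : ∃ i, 0 < n i) :
    Iso ((cycle k).addSource fun ie : (i : Fin k) × Fin (n i) => ie.1) (Egraph k n) := by
  unfold Egraph addSource
  exact .of_inverses (Sum.map id fun _ => ⟨(), hn⟩) (Sum.map id fun _ => ()) id id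
    (by rintro (_ | _) <;> rfl) (by rintro (_ | _) <;> rfl) (fun _ => rfl) (fun _ => rfl)
    (by rintro (_ | _) <;> rfl) (by rintro (_ | _) <;> rfl)

end CKGraph

open CKGraph

theorem Egraph_moveEquiv_O_Iminus_general (k : ℕ) (n : Fin k → ℕ) :
    MoveEquiv (fun A B => MoveO A B ∨ MoveIm A B)
      (Egraph k n) (Egraph k (fun _ => 0)) := by
  refine ⟨Egraph k fun _ => 0, ?_, Iso.refl _⟩
  change Relation.ReflTransGen (Relation.SymmGen OIMove) _ _
  rw [Relation.EqvGen.reflTransGen_symmGen]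
  by_cases hn : ∃ i, 0 < n i
  · obtain ⟨i, hi⟩ := hn
    have : Nonempty ((i : Fin k) × Fin (n i)) := ⟨⟨i, 0, hi⟩⟩
    obtain ⟨w, e₀, hw, -⟩ := cycle_exists_emitsOnly i
    calc Egraph k n ≈ₘ (cycle k).addSource fun ie : (i : Fin k) × Fin (n i) => ie.1 :=
          symm (eqvGen_of_iso (hw.addSource _).regular (iso_addSource_cycle_Egraph ⟨i, hi⟩))
      _ ≈ₘ cycle k := eqvGen_addSource cycle_exists_emitsOnly _
      _ ≈ₘ Egraph k fun _ => 0 := eqvGen_of_iso hw.regular (iso_cycle_Egraph_zero k)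
  · obtain rfl : n = fun _ => 0 := funext fun i => Nat.eq_zero_of_not_pos fun h => hn ⟨i, h⟩
    exact .refl _

/-- For `k ≥ 1` and `n₁, …, n_k ≥ 0`, the graph `E(n₁,…,n_k)` is
move equivalent via the moves (O) and (I-) to the plain cycle `E(0,…,0)` of
length `k`. -/
theorem Egraph_moveEquiv_O_Iminus (k : ℕ) (hk : 1 ≤ k) (n : Fin k → ℕ) :
    MoveEquiv (fun A B => MoveO A B ∨ MoveIm A B)
      (Egraph k n) (Egraph k (fun _ => 0)) :=
  Egraph_moveEquiv_O_Iminus_general k n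
end

section
/- Let h : G → G be an order isomorphism of G = ⊕_{i∈ℤ} ℤ (with the lexicographic order) satisfying h∘σ = σ∘h. Suppose that for integers k, ℓ ≥ 0 and integers n₁, …, n_k ≥ 1 and m₁, …, m_ℓ ≥ 1 one has h(e₀ + Σ_{i=1}^{k} nᵢ e_i) = e₀ + Σ_{j=1}^{ℓ} m_j e_j. Then k = ℓ and nᵢ = mᵢ for all 1 ≤ i ≤ k. -/
/-- The shift automorphism `σ` of `⊕_{i∈ℤ} ℤ`, determined by
`σ(e_i) = e_{i+1}`. -/
noncomputable def shiftZ : (ℤ →₀ ℤ) ≃+ (ℤ →₀ ℤ) :=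
  Finsupp.domCongr (Equiv.addRight (1 : ℤ))

section Aux

lemma shiftZ_single (a b : ℤ) : shiftZ (Finsupp.single a b) = Finsupp.single (a + 1) b := by
  simp only [shiftZ, Finsupp.domCongr_apply, Finsupp.equivMapDomain_single,
    Equiv.coe_addRight]

open AddMonoidAlgebra

lemma shift_mul (f : AddMonoidAlgebra ℤ ℤ) :
    shiftZ f.coeff = (f * AddMonoidAlgebra.single (1 : ℤ) (1 : ℤ)).coeff := by
  induction f using AddMonoidAlgebra.induction with
  | zero => simp [map_zero]
  | single_add a b f _ _ ih =>
    rw [AddMonoidAlgebra.coeff_add, map_add, add_mul, AddMonoidAlgebra.coeff_add, ih]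
    congr 1
    rw [AddMonoidAlgebra.single_mul_single, mul_one]
    exact shiftZ_single a b

/-- `h` viewed as a self-map of the Laurent polynomial ring. -/
noncomputable def HH (h : (ℤ →₀ ℤ) ≃+ (ℤ →₀ ℤ)) :
    AddMonoidAlgebra ℤ ℤ → AddMonoidAlgebra ℤ ℤ := fun g => AddMonoidAlgebra.ofCoeff (h g.coeff)

lemma rep (h : (ℤ →₀ ℤ) ≃+ (ℤ →₀ ℤ))
    (hcomm : ∀ f, h (shiftZ f) = shiftZ (h f)) (f : AddMonoidAlgebra ℤ ℤ) :
    HH h f = f * HH h (1 : AddMonoidAlgebra ℤ ℤ) := by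
  set H : AddMonoidAlgebra ℤ ℤ → AddMonoidAlgebra ℤ ℤ := HH h with hH
  have Hadd : ∀ x y : AddMonoidAlgebra ℤ ℤ, H (x + y) = H x + H y := fun x y =>
    congrArg AddMonoidAlgebra.ofCoeff (map_add h x.coeff y.coeff)
  have Hsmul : ∀ (b : ℤ) (x : AddMonoidAlgebra ℤ ℤ), H (b • x) = b • H x := fun b x =>
    congrArg AddMonoidAlgebra.ofCoeff (map_zsmul h.toAddMonoidHom b x.coeff)
  show H f = f * H 1
  set u : AddMonoidAlgebra ℤ ℤ := H 1 with hu
  have hc1 : ∀ g : AddMonoidAlgebra ℤ ℤ,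
      H (g * single (1:ℤ) (1:ℤ)) = H g * single (1:ℤ) (1:ℤ) := by
    intro g
    show AddMonoidAlgebra.ofCoeff (h (g * single (1:ℤ) (1:ℤ)).coeff) = _
    rw [← shift_mul g, hcomm, ← AddMonoidAlgebra.coeff_ofCoeff (h g.coeff), shift_mul]
    rfl
  have hneg1 : (single (-1:ℤ) (1:ℤ) : AddMonoidAlgebra ℤ ℤ) * single (1:ℤ) (1:ℤ) = 1 := by
    rw [single_mul_single]; norm_num [AddMonoidAlgebra.one_def]
  have hcneg : ∀ g : AddMonoidAlgebra ℤ ℤ,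
      H (g * single (-1:ℤ) (1:ℤ)) = H g * single (-1:ℤ) (1:ℤ) := by
    intro g
    have h2 := hc1 (g * single (-1:ℤ) (1:ℤ))
    rw [mul_assoc, hneg1, mul_one] at h2
    calc H (g * single (-1:ℤ) (1:ℤ))
        = H (g * single (-1:ℤ) (1:ℤ)) * (single (-1:ℤ) (1:ℤ) * single (1:ℤ) (1:ℤ)) := by
          rw [hneg1, mul_one]
      _ = H (g * single (-1:ℤ) (1:ℤ)) * single (1:ℤ) (1:ℤ) * single (-1:ℤ) (1:ℤ) := by
          ring
      _ = H g * single (-1:ℤ) (1:ℤ) := by rw [h2]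
  have hsingle1 : ∀ a : ℤ, H (single a (1:ℤ)) = single a (1:ℤ) * u := by
    intro a
    induction a using Int.induction_on with
    | zero => rw [← AddMonoidAlgebra.one_def, one_mul]
    | succ i ih =>
      have e1 : (single ((i:ℤ)+1) (1:ℤ) : AddMonoidAlgebra ℤ ℤ)
          = single (i:ℤ) (1:ℤ) * single (1:ℤ) (1:ℤ) := by
        rw [single_mul_single, mul_one]
      rw [e1, hc1, ih]; ring
    | pred i ih =>
      have e1 : (single (-(i:ℤ)-1) (1:ℤ) : AddMonoidAlgebra ℤ ℤ)
          = single (-(i:ℤ)) (1:ℤ) * single (-1:ℤ) (1:ℤ) := by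
        rw [single_mul_single, mul_one]; ring_nf
      rw [e1, hcneg, ih]; ring
  have hsingle : ∀ (a b : ℤ), H (single a b) = single a b * u := by
    intro a b
    have h1 : (single a b : AddMonoidAlgebra ℤ ℤ) = b • single a (1:ℤ) := by
      rw [AddMonoidAlgebra.smul_single', mul_one]
    rw [h1, Hsmul, hsingle1, smul_mul_assoc]
  induction f using AddMonoidAlgebra.induction with
  | zero =>
    show H 0 = 0 * u
    rw [show (H 0 : AddMonoidAlgebra ℤ ℤ) = 0 from congrArg AddMonoidAlgebra.ofCoeff (map_zero h),
      zero_mul]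
  | single_add a b f _ _ ih =>
    have e1 : H (single a b + f) = H (single a b) + H f := Hadd (single a b) f
    rw [e1, ih, hsingle]
    exact (add_mul (single a b) f u).symm


lemma mul_apply_max (u v : AddMonoidAlgebra ℤ ℤ)
    (cu cv : ℤ) (hcu : cu ∈ u.coeff.support) (hcv : cv ∈ v.coeff.support)
    (hmu : ∀ a ∈ u.coeff.support, a ≤ cu) (hmv : ∀ b ∈ v.coeff.support, b ≤ cv) :
    (u * v).coeff (cu + cv) = u.coeff cu * v.coeff cv := by
  classical
  rw [AddMonoidAlgebra.coeff_mul, Finsupp.sum, Finset.sum_eq_single cu]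
  · rw [Finsupp.sum, Finset.sum_eq_single cv]
    · rw [if_pos rfl]
    · intro b hb hbne
      exact if_neg fun hEq => hbne (by omega)
    · intro hcv'; exact absurd hcv hcv'
  · intro a ha hane
    rw [Finsupp.sum]
    refine Finset.sum_eq_zero fun b hb => if_neg fun hEq => ?_
    have h1 := hmu a ha
    have h2 := hmv b hb
    omega
  · intro h'; exact absurd hcu h'

lemma mul_apply_min (u v : AddMonoidAlgebra ℤ ℤ)
    (cu cv : ℤ) (hcu : cu ∈ u.coeff.support) (hcv : cv ∈ v.coeff.support)
    (hmu : ∀ a ∈ u.coeff.support, cu ≤ a) (hmv : ∀ b ∈ v.coeff.support, cv ≤ b) :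
    (u * v).coeff (cu + cv) = u.coeff cu * v.coeff cv := by
  classical
  rw [AddMonoidAlgebra.coeff_mul, Finsupp.sum, Finset.sum_eq_single cu]
  · rw [Finsupp.sum, Finset.sum_eq_single cv]
    · rw [if_pos rfl]
    · intro b hb hbne
      exact if_neg fun hEq => hbne (by omega)
    · intro hcv'; exact absurd hcv hcv'
  · intro a ha hane
    rw [Finsupp.sum]
    refine Finset.sum_eq_zero fun b hb => if_neg fun hEq => ?_
    have h1 := hmu a ha
    have h2 := hmv b hb
    omega
  · intro h'; exact absurd hcu h'

lemma unit_eq_single (u v : AddMonoidAlgebra ℤ ℤ) (huv : u * v = 1) :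
    ∃ (c d e e' : ℤ), c + d = 0 ∧ e * e' = 1 ∧
      u = AddMonoidAlgebra.single c e ∧ v = AddMonoidAlgebra.single d e' := by
  classical
  have hone : ∀ x : ℤ, (1 : AddMonoidAlgebra ℤ ℤ).coeff x = if (0:ℤ) = x then 1 else 0 := by
    intro x
    rw [AddMonoidAlgebra.one_def]
    exact Finsupp.single_apply
  have hu0 : u ≠ 0 := by
    rintro rfl; rw [zero_mul] at huv; exact one_ne_zero huv.symm
  have hv0 : v ≠ 0 := by
    rintro rfl; rw [mul_zero] at huv; exact one_ne_zero huv.symm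
  have hus : u.coeff.support.Nonempty := Finsupp.support_nonempty_iff.mpr
    (fun h0 => hu0 (AddMonoidAlgebra.coeff_eq_zero.mp h0))
  have hvs : v.coeff.support.Nonempty := Finsupp.support_nonempty_iff.mpr
    (fun h0 => hv0 (AddMonoidAlgebra.coeff_eq_zero.mp h0))
  set cu := u.coeff.support.max' hus with hcu
  set c'u := u.coeff.support.min' hus with hc'u
  set dv := v.coeff.support.max' hvs with hdv
  set d'v := v.coeff.support.min' hvs with hd'v
  have hmax : (u * v).coeff (cu + dv) = u.coeff cu * v.coeff dv :=
    mul_apply_max u v cu dv (u.coeff.support.max'_mem hus) (v.coeff.support.max'_mem hvs)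
      (fun a ha => Finset.le_max' _ a ha) (fun b hb => Finset.le_max' _ b hb)
  have hmin : (u * v).coeff (c'u + d'v) = u.coeff c'u * v.coeff d'v :=
    mul_apply_min u v c'u d'v (u.coeff.support.min'_mem hus) (v.coeff.support.min'_mem hvs)
      (fun a ha => Finset.min'_le _ a ha) (fun b hb => Finset.min'_le _ b hb)
  have hne1 : u.coeff cu * v.coeff dv ≠ 0 :=
    mul_ne_zero (Finsupp.mem_support_iff.mp (u.coeff.support.max'_mem hus))
      (Finsupp.mem_support_iff.mp (v.coeff.support.max'_mem hvs))
  have hne2 : u.coeff c'u * v.coeff d'v ≠ 0 :=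
    mul_ne_zero (Finsupp.mem_support_iff.mp (u.coeff.support.min'_mem hus))
      (Finsupp.mem_support_iff.mp (v.coeff.support.min'_mem hvs))
  rw [huv, hone] at hmax hmin
  have hmax0 : cu + dv = 0 := by
    by_contra hc
    rw [if_neg (by omega)] at hmax
    exact hne1 hmax.symm
  have hmin0 : c'u + d'v = 0 := by
    by_contra hc
    rw [if_neg (by omega)] at hmin
    exact hne2 hmin.symm
  have hle1 : c'u ≤ cu := Finset.min'_le _ _ (u.coeff.support.max'_mem hus)
  have hle2 : d'v ≤ dv := Finset.min'_le _ _ (v.coeff.support.max'_mem hvs)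
  have hcc : c'u = cu := by omega
  have hdd : d'v = dv := by omega
  have hus1 : u.coeff.support ⊆ {cu} := by
    intro a ha
    have h1 := Finset.le_max' _ a ha
    have h2 := Finset.min'_le _ a ha
    rw [Finset.mem_singleton]; omega
  have hvs1 : v.coeff.support ⊆ {dv} := by
    intro a ha
    have h1 := Finset.le_max' _ a ha
    have h2 := Finset.min'_le _ a ha
    rw [Finset.mem_singleton]; omega
  have hu1 : u = AddMonoidAlgebra.single cu (u.coeff cu) :=
    AddMonoidAlgebra.coeff_injective (Finsupp.support_subset_singleton.mp hus1)
  have hv1 : v = AddMonoidAlgebra.single dv (v.coeff dv) :=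
    AddMonoidAlgebra.coeff_injective (Finsupp.support_subset_singleton.mp hvs1)
  refine ⟨cu, dv, u.coeff cu, v.coeff dv, hmax0, ?_, hu1, hv1⟩
  have := hmax
  rw [if_pos hmax0.symm] at this
  exact this.symm

lemma gen_apply (k : ℕ) (n : Fin k → ℤ) (j : ℤ) :
    ((Finsupp.single (0:ℤ) 1 + ∑ i : Fin k, Finsupp.single (((i:ℕ):ℤ)+1) (n i) : ℤ →₀ ℤ)) j
      = (if (0:ℤ) = j then 1 else 0)
        + ∑ i : Fin k, (if ((i:ℕ):ℤ)+1 = j then n i else 0) := by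
  classical
  rw [Finsupp.add_apply, Finsupp.finset_sum_apply]
  congr 1
  · exact Finsupp.single_apply
  · exact Finset.sum_congr rfl fun i _ => Finsupp.single_apply

lemma gen_apply_zero (k : ℕ) (n : Fin k → ℤ) :
    ((Finsupp.single (0:ℤ) 1 + ∑ i : Fin k, Finsupp.single (((i:ℕ):ℤ)+1) (n i) : ℤ →₀ ℤ)) 0 = 1 := by
  classical
  rw [gen_apply, if_pos rfl, Finset.sum_eq_zero fun i _ => if_neg (by omega), add_zero]

lemma gen_apply_neg (k : ℕ) (n : Fin k → ℤ) (j : ℤ) (hj : j < 0) :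
    ((Finsupp.single (0:ℤ) 1 + ∑ i : Fin k, Finsupp.single (((i:ℕ):ℤ)+1) (n i) : ℤ →₀ ℤ)) j = 0 := by
  classical
  rw [gen_apply, if_neg (by omega), Finset.sum_eq_zero fun i _ => if_neg (by omega), add_zero]

lemma gen_apply_succ (k : ℕ) (n : Fin k → ℤ) (i : Fin k) :
    ((Finsupp.single (0:ℤ) 1 + ∑ i : Fin k, Finsupp.single (((i:ℕ):ℤ)+1) (n i) : ℤ →₀ ℤ))
      (((i:ℕ):ℤ)+1) = n i := by
  classical
  rw [gen_apply, if_neg (by omega), Finset.sum_eq_single i]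
  · rw [if_pos rfl, zero_add]
  · intro i' _ hne
    refine if_neg fun hc => hne (Fin.ext ?_)
    omega
  · intro hmem; exact absurd (Finset.mem_univ i) hmem

lemma gen_apply_large (k : ℕ) (n : Fin k → ℤ) (j : ℤ) (hj : (k:ℤ) < j) :
    ((Finsupp.single (0:ℤ) 1 + ∑ i : Fin k, Finsupp.single (((i:ℕ):ℤ)+1) (n i) : ℤ →₀ ℤ)) j = 0 := by
  classical
  rw [gen_apply, if_neg (by omega),
    Finset.sum_eq_zero fun i _ => if_neg (by have := i.isLt; omega), add_zero]


/-- Identity bridge between the finsupp type and the Laurent-polynomial type. -/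
def toLP (f : ℤ →₀ ℤ) : AddMonoidAlgebra ℤ ℤ := AddMonoidAlgebra.ofCoeff f

lemma mul_single_apply' (f : AddMonoidAlgebra ℤ ℤ) (r x y : ℤ) :
    (f * AddMonoidAlgebra.single x r : AddMonoidAlgebra ℤ ℤ).coeff y = f.coeff (y - x) * r := by
  rw [AddMonoidAlgebra.coeff_mul_single_apply, sub_eq_add_neg]

end Aux

/-- The lexicographic order on `⊕_{i∈ℤ} ℤ`: `f ≤ g` iff `f = g` or at the
first index where they differ (the minimal element of the support of `g - f`),
the coordinate of `f` is smaller. -/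
def lexLE (f g : ℤ →₀ ℤ) : Prop :=
  f = g ∨ ∃ i : ℤ, (∀ j < i, f j = g j) ∧ f i < g i

/-- An order isomorphism of `⊕_{i∈ℤ} ℤ` with the lexicographic
order, commuting with the shift and sending `e₀ + Σ nᵢ e_i` to
`e₀ + Σ m_j e_j` (with all `nᵢ, m_j ≥ 1`) forces `k = ℓ` and `nᵢ = mᵢ`. -/
theorem pointed_K_rigidity_lex (h : (ℤ →₀ ℤ) ≃+ (ℤ →₀ ℤ))
    (hmono : ∀ f g : ℤ →₀ ℤ, lexLE f g → lexLE (h f) (h g))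
    (hmono' : ∀ f g : ℤ →₀ ℤ, lexLE f g → lexLE (h.symm f) (h.symm g))
    (hcomm : ∀ f, h (shiftZ f) = shiftZ (h f))
    (k l : ℕ) (n : Fin k → ℤ) (m : Fin l → ℤ)
    (hn : ∀ i, 1 ≤ n i) (hm : ∀ j, 1 ≤ m j)
    (heq : h (Finsupp.single (0 : ℤ) 1 +
        ∑ i : Fin k, Finsupp.single (((i : ℕ) : ℤ) + 1) (n i))
      = Finsupp.single (0 : ℤ) 1 +
        ∑ j : Fin l, Finsupp.single (((j : ℕ) : ℤ) + 1) (m j)) :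
    ∃ hkl : k = l, ∀ i : Fin k, n i = m (Fin.cast hkl i) := by
  classical
  set a : ℤ →₀ ℤ := Finsupp.single (0 : ℤ) 1 +
      ∑ i : Fin k, Finsupp.single (((i : ℕ) : ℤ) + 1) (n i) with ha
  set b : ℤ →₀ ℤ := Finsupp.single (0 : ℤ) 1 +
      ∑ j : Fin l, Finsupp.single (((j : ℕ) : ℤ) + 1) (m j) with hb
  have hcomm' : ∀ f, h.symm (shiftZ f) = shiftZ (h.symm f) := by
    intro f
    apply h.injective
    rw [hcomm, h.apply_symm_apply, h.apply_symm_apply]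
  have hrep : ∀ f : AddMonoidAlgebra ℤ ℤ, HH h f = f * HH h (1 : AddMonoidAlgebra ℤ ℤ) :=
    rep h hcomm
  have hrep' : ∀ f : AddMonoidAlgebra ℤ ℤ,
      HH h.symm f = f * HH h.symm (1 : AddMonoidAlgebra ℤ ℤ) := rep h.symm hcomm'
  set u : AddMonoidAlgebra ℤ ℤ := HH h 1 with hu
  set v : AddMonoidAlgebra ℤ ℤ := HH h.symm 1 with hv
  have huv : u * v = 1 := by
    have h1 : HH h.symm u = u * v := hrep' u
    have h2 : HH h.symm u = (1 : AddMonoidAlgebra ℤ ℤ) := by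
      show AddMonoidAlgebra.ofCoeff (h.symm (h (1 : AddMonoidAlgebra ℤ ℤ).coeff))
        = AddMonoidAlgebra.ofCoeff (1 : AddMonoidAlgebra ℤ ℤ).coeff
      exact congrArg AddMonoidAlgebra.ofCoeff (h.symm_apply_apply _)
    rw [← h1, h2]
  obtain ⟨c, d, e, e', hcd, hee, hue, hve⟩ := unit_eq_single u v huv
  have h3 : toLP b = toLP a * AddMonoidAlgebra.single c e := by
    rw [← heq]
    show HH h (toLP a) = toLP a * AddMonoidAlgebra.single c e
    rw [hrep (toLP a), hue]
  have hba : ∀ j : ℤ, b j = a (j - c) * e := by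
    intro j
    show (toLP b).coeff j = _
    rw [h3]
    exact mul_single_apply' (toLP a) e c j
  have h0 : h.symm b = a := by rw [← heq, h.symm_apply_apply]
  have h3' : toLP a = toLP b * AddMonoidAlgebra.single d e' := by
    rw [← h0]
    show HH h.symm (toLP b) = toLP b * AddMonoidAlgebra.single d e'
    rw [hrep' (toLP b), hve]
  have hab : ∀ j : ℤ, a j = b (j - d) * e' := by
    intro j
    show (toLP a).coeff j = _
    rw [h3']
    exact mul_single_apply' (toLP b) e' d j
  have he0 : e ≠ 0 := fun h0 => by rw [h0, zero_mul] at hee; exact one_ne_zero hee.symm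
  have he'0 : e' ≠ 0 := fun h0 => by rw [h0, mul_zero] at hee; exact one_ne_zero hee.symm
  have ha0 : a 0 = 1 := by rw [ha]; exact gen_apply_zero k n
  have hb0 : b 0 = 1 := by rw [hb]; exact gen_apply_zero l m
  have hc0 : c = 0 := by
    rcases lt_trichotomy c 0 with hc | hc | hc
    · exfalso
      have h1 := hba c
      rw [sub_self, ha0, one_mul] at h1
      have h2 : b c = 0 := by rw [hb]; exact gen_apply_neg l m c hc
      exact he0 (h2 ▸ h1.symm)
    · exact hc
    · exfalso
      have hd : d < 0 := by omega
      have h1 := hab d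
      rw [sub_self, hb0, one_mul] at h1
      have h2 : a d = 0 := by rw [ha]; exact gen_apply_neg k n d hd
      exact he'0 (h2 ▸ h1.symm)
  have he1 : e = 1 := by
    have h1 := hba 0
    rw [hc0, sub_zero, hb0, ha0, one_mul] at h1
    exact h1.symm
  have hab2 : ∀ j : ℤ, b j = a j := by
    intro j
    have h1 := hba j
    rw [hc0, sub_zero, he1, mul_one] at h1
    exact h1
  have hkl : k = l := by
    by_contra hne
    rcases Nat.lt_or_ge k l with hlt | hge
    · have h1 := hab2 ((k:ℕ) + 1 : ℤ)
      have h2 : a ((k:ℕ) + 1 : ℤ) = 0 := by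
        rw [ha]; exact gen_apply_large k n _ (by omega)
      have h3 : b ((k:ℕ) + 1 : ℤ) = m ⟨k, hlt⟩ := by
        rw [hb]
        have h4 := gen_apply_succ l m ⟨k, hlt⟩
        simpa using h4
      have h5 := hm ⟨k, hlt⟩
      omega
    · have hlt : l < k := by omega
      have h1 := hab2 ((l:ℕ) + 1 : ℤ)
      have h2 : b ((l:ℕ) + 1 : ℤ) = 0 := by
        rw [hb]; exact gen_apply_large l m _ (by omega)
      have h3 : a ((l:ℕ) + 1 : ℤ) = n ⟨l, hlt⟩ := by
        rw [ha]
        have h4 := gen_apply_succ k n ⟨l, hlt⟩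
        simpa using h4
      have h5 := hn ⟨l, hlt⟩
      omega
  refine ⟨hkl, ?_⟩
  intro i
  have h1 := hab2 (((i:ℕ):ℤ) + 1)
  have h2 : a (((i:ℕ):ℤ) + 1) = n i := by rw [ha]; exact gen_apply_succ k n i
  have h3 : b (((i:ℕ):ℤ) + 1) = m (Fin.cast hkl i) := by
    rw [hb]
    have h4 := gen_apply_succ l m (Fin.cast hkl i)
    simpa using h4
  omega
end
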